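/- There exists a constant C > 0 such that for every twice continuously differentiable function f : ℝ → ℝ that is 2π-periodic, one has ‖f'‖_{L⁴(Ω)} ≤ C ‖f‖_{L^∞(Ω)}^{1/2} ‖f''‖_{L²(Ω)}^{1/2}, where Ω = [−π, π]. -/

import Mathlib

open MeasureTheory Real Set

/-- The `L²` norm of `f` over one period `Ω = [-π, π]`. -/
noncomputable def L2Norm (f : ℝ → ℝ) : ℝ := (∫ x in (-π)..π, (f x) ^ 2) ^ ((1 : ℝ) / 2)

/-- The `L⁴` norm of `f` over one period `Ω = [-π, π]`. -/
noncomputable def L4Norm (f : ℝ → ℝ) : ℝ := (∫ x in (-π)..π, |f x| ^ 4) ^ ((1 : ℝ) / 4)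

/-- The supremum of `|f|` over one period `Ω = [-π, π]`. -/
noncomputable def supNorm (f : ℝ → ℝ) : ℝ := sSup ((fun x => |f x|) '' Icc (-π) π)

lemma periodic_deriv' {f : ℝ → ℝ} (c : ℝ) (h : Function.Periodic f c) :
    Function.Periodic (deriv f) c := by
  intro x
  have : (fun y => f (y + c)) = f := funext fun y => h y
  calc deriv f (x + c) = deriv (fun y => f (y + c)) x := (deriv_comp_add_const f c x).symm
    _ = deriv f x := by rw [this]

theorem interp_L4_deriv :
    ∃ C : ℝ, 0 < C ∧ ∀ f : ℝ → ℝ, ContDiff ℝ 2 f → Function.Periodic f (2 * π) →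
      L4Norm (deriv f) ≤ C * (supNorm f) ^ ((1 : ℝ) / 2)
        * (L2Norm (deriv (deriv f))) ^ ((1 : ℝ) / 2) := by
  refine ⟨3, by norm_num, fun f hf hper => ?_⟩
  have hππ : (-π : ℝ) ≤ π := by linarith [pi_pos]
  -- regularity
  have hdf : Differentiable ℝ f := hf.differentiable (by norm_num)
  have h1 : ContDiff ℝ 1 (deriv f) := by
    have := (contDiff_succ_iff_deriv (n := 1)).mp (by exact_mod_cast hf)
    exact this.2.2
  have hdf' : Differentiable ℝ (deriv f) := h1.differentiable (by norm_num)
  have hcf : Continuous f := hf.continuous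
  have hcf' : Continuous (deriv f) := hdf'.continuous
  have hcf'' : Continuous (deriv (deriv f)) := by
    have := (contDiff_succ_iff_deriv (n := 0)).mp (by exact_mod_cast h1)
    exact this.2.2.continuous
  have hper' : Function.Periodic (deriv f) (2 * π) := periodic_deriv' _ hper
  set M := supNorm f with hM
  -- bounds on M
  have hbdd : BddAbove ((fun x => |f x|) '' Icc (-π) π) :=
    (isCompact_Icc.image (continuous_abs.comp hcf)).bddAbove
  have hMle : ∀ x ∈ Icc (-π) π, |f x| ≤ M := fun x hx =>
    le_csSup hbdd ⟨x, hx, rfl⟩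
  have hM0 : 0 ≤ M := le_trans (abs_nonneg _) (hMle 0 ⟨by linarith [pi_pos], le_of_lt pi_pos⟩)
  set A := ∫ x in (-π)..π, (deriv f x) ^ 4 with hA
  set B := ∫ x in (-π)..π, (deriv (deriv f) x) ^ 2 with hB
  have hA0 : 0 ≤ A := intervalIntegral.integral_nonneg hππ (fun x _ => by positivity)
  have hB0 : 0 ≤ B := intervalIntegral.integral_nonneg hππ (fun x _ => sq_nonneg _)
  -- integration by parts identity
  have hderiv : ∀ x : ℝ, HasDerivAt (fun y => f y * (deriv f y) ^ 3)
      ((deriv f x) ^ 4 + 3 * (f x * ((deriv f x) ^ 2 * deriv (deriv f) x))) x := by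
    intro x
    have h1 : HasDerivAt (fun y => f y * (deriv f y) ^ 3) (deriv f x * deriv f x ^ 3 + f x * (((3:ℕ):ℝ) * deriv f x ^ (3 - 1) * deriv (deriv f) x)) x := (hdf x).hasDerivAt.mul (((hdf' x).hasDerivAt).pow 3)
    convert h1 using 1
    ring
  have hintg : IntervalIntegrable
      (fun x => (deriv f x) ^ 4 + 3 * (f x * ((deriv f x) ^ 2 * deriv (deriv f) x)))
      volume (-π) π :=
    ((hcf'.pow 4).add (continuous_const.mul (hcf.mul ((hcf'.pow 2).mul hcf'')))).intervalIntegrable _ _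
  have hparts : (∫ x in (-π)..π,
      ((deriv f x) ^ 4 + 3 * (f x * ((deriv f x) ^ 2 * deriv (deriv f) x)))) = 0 := by
    rw [intervalIntegral.integral_eq_sub_of_hasDerivAt (fun x _ => hderiv x) hintg]
    have e1 : f π = f (-π) := by
      have := hper (-π); rw [show -π + 2 * π = π by ring] at this; exact this
    have e2 : deriv f π = deriv f (-π) := by
      have := hper' (-π); rw [show -π + 2 * π = π by ring] at this; exact this
    rw [e1, e2]; ring
  have hint1 : IntervalIntegrable (fun x => (deriv f x) ^ 4) volume (-π) π :=
    (hcf'.pow 4).intervalIntegrable _ _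
  have hint2 : IntervalIntegrable (fun x => 3 * (f x * ((deriv f x) ^ 2 * deriv (deriv f) x)))
      volume (-π) π :=
    (continuous_const.mul (hcf.mul ((hcf'.pow 2).mul hcf''))).intervalIntegrable _ _
  have hkey : A = -3 * ∫ x in (-π)..π, f x * ((deriv f x) ^ 2 * deriv (deriv f) x) := by
    have := intervalIntegral.integral_add hint1 hint2
    rw [this, intervalIntegral.integral_const_mul] at hparts
    linarith [hparts]
  -- bound A ≤ 3 M ∫ (f')² |f''|
  have habs : A ≤ 3 * M * ∫ x in (-π)..π, (deriv f x) ^ 2 * |deriv (deriv f) x| := by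
    rw [hkey]
    have h1 : |∫ x in (-π)..π, f x * ((deriv f x) ^ 2 * deriv (deriv f) x)|
        ≤ ∫ x in (-π)..π, |f x * ((deriv f x) ^ 2 * deriv (deriv f) x)| := by
      apply intervalIntegral.abs_integral_le_integral_abs hππ
    have h2 : (∫ x in (-π)..π, |f x * ((deriv f x) ^ 2 * deriv (deriv f) x)|)
        ≤ ∫ x in (-π)..π, M * ((deriv f x) ^ 2 * |deriv (deriv f) x|) := by
      apply intervalIntegral.integral_mono_on hππ
      · exact (hcf.mul ((hcf'.pow 2).mul hcf'')).abs.intervalIntegrable _ _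
      · exact (continuous_const.mul ((hcf'.pow 2).mul hcf''.abs)).intervalIntegrable _ _
      · intro x hx
        rw [abs_mul, abs_mul, abs_pow, sq_abs]
        exact mul_le_mul_of_nonneg_right (hMle x hx)
          (mul_nonneg (sq_nonneg _) (abs_nonneg _))
    rw [intervalIntegral.integral_const_mul] at h2
    have h3 : -3 * ∫ x in (-π)..π, f x * ((deriv f x) ^ 2 * deriv (deriv f) x)
        ≤ 3 * |∫ x in (-π)..π, f x * ((deriv f x) ^ 2 * deriv (deriv f) x)| := by
      have := neg_abs_le (∫ x in (-π)..π, f x * ((deriv f x) ^ 2 * deriv (deriv f) x))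
      nlinarith [abs_nonneg (∫ x in (-π)..π, f x * ((deriv f x) ^ 2 * deriv (deriv f) x))]
    calc -3 * ∫ x in (-π)..π, f x * ((deriv f x) ^ 2 * deriv (deriv f) x)
        ≤ 3 * |∫ x in (-π)..π, f x * ((deriv f x) ^ 2 * deriv (deriv f) x)| := h3
      _ ≤ 3 * ∫ x in (-π)..π, |f x * ((deriv f x) ^ 2 * deriv (deriv f) x)| := by linarith
      _ ≤ 3 * (M * ∫ x in (-π)..π, (deriv f x) ^ 2 * |deriv (deriv f) x|) := by linarith
      _ = 3 * M * ∫ x in (-π)..π, (deriv f x) ^ 2 * |deriv (deriv f) x| := by ring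
  -- Cauchy–Schwarz
  have hCS : (∫ x in (-π)..π, (deriv f x) ^ 2 * |deriv (deriv f) x|)
      ≤ A ^ ((1:ℝ)/2) * B ^ ((1:ℝ)/2) := by
    set μ := volume.restrict (Ioc (-π) π) with hμ
    haveI : Fact ((volume : Measure ℝ) (Ioc (-π) π) < ⊤) := ⟨measure_Ioc_lt_top⟩
    have hconj : (2:ℝ).HolderConjugate 2 := Real.HolderConjugate.two_two
    have hmemp : ∀ (g : ℝ → ℝ), Continuous g → MemLp g (ENNReal.ofReal 2) μ := by
      intro g hg
      obtain ⟨K, hK⟩ := (isCompact_Icc.image (hg.abs)).bddAbove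
      refine MemLp.mono_exponent (q := ⊤) ?_ le_top
      apply memLp_top_of_bound hg.aestronglyMeasurable K
      rw [hμ, ae_restrict_iff' measurableSet_Ioc]
      filter_upwards with x hx
      exact hK ⟨x, Ioc_subset_Icc_self hx, rfl⟩
    have h := integral_mul_le_Lp_mul_Lq_of_nonneg (μ := μ) hconj
      (f := fun x => (deriv f x) ^ 2) (g := fun x => |deriv (deriv f) x|)
      (Filter.Eventually.of_forall fun x => sq_nonneg _)
      (Filter.Eventually.of_forall fun x => abs_nonneg _)
      (hmemp _ (hcf'.pow 2)) (hmemp _ hcf''.abs)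
    rw [intervalIntegral.integral_of_le hππ]
    have e1 : (∫ a, ((deriv f a) ^ 2) ^ (2:ℝ) ∂μ) = A := by
      rw [hA, intervalIntegral.integral_of_le hππ]
      apply integral_congr_ae
      filter_upwards with x
      rw [show ((2:ℝ)) = ((2:ℕ):ℝ) by norm_num, Real.rpow_natCast]
      ring
    have e2 : (∫ a, |deriv (deriv f) a| ^ (2:ℝ) ∂μ) = B := by
      rw [hB, intervalIntegral.integral_of_le hππ]
      apply integral_congr_ae
      filter_upwards with x
      rw [show ((2:ℝ)) = ((2:ℕ):ℝ) by norm_num, Real.rpow_natCast, sq_abs]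
    rw [e1, e2] at h
    exact h
  -- combine
  have hAle : A ≤ 3 * M * (A ^ ((1:ℝ)/2) * B ^ ((1:ℝ)/2)) := by
    calc A ≤ 3 * M * ∫ x in (-π)..π, (deriv f x) ^ 2 * |deriv (deriv f) x| := habs
      _ ≤ 3 * M * (A ^ ((1:ℝ)/2) * B ^ ((1:ℝ)/2)) := by
          apply mul_le_mul_of_nonneg_left hCS (by positivity)
  -- L4Norm (deriv f) = A ^ (1/4)
  have hL4 : L4Norm (deriv f) = A ^ ((1:ℝ)/4) := by
    rw [L4Norm, hA]
    congr 1
    apply intervalIntegral.integral_congr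
    intro x _
    show |deriv f x| ^ 4 = deriv f x ^ 4
    rw [pow_abs]
    exact abs_of_nonneg (by positivity)
  have hL2 : L2Norm (deriv (deriv f)) = B ^ ((1:ℝ)/2) := rfl
  rw [hL4, hL2, ← Real.rpow_mul hB0]
  norm_num
  -- goal: A ^ (1/4) ≤ 3 * M ^ (1/2) * B ^ (1/4)
  rcases eq_or_lt_of_le hA0 with hAz | hApos
  · rw [← hAz, Real.zero_rpow (by norm_num)]
    positivity
  · have hhalf : A ^ ((1:ℝ)/2) ≤ 3 * M * B ^ ((1:ℝ)/2) := by
      have hAp2 : (0:ℝ) < A ^ ((1:ℝ)/2) := Real.rpow_pos_of_pos hApos _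
      apply le_of_mul_le_mul_right _ hAp2
      calc A ^ ((1:ℝ)/2) * A ^ ((1:ℝ)/2)
          = A := by
            rw [← Real.rpow_add hApos]; norm_num
        _ ≤ 3 * M * (A ^ ((1:ℝ)/2) * B ^ ((1:ℝ)/2)) := hAle
        _ = 3 * M * B ^ ((1:ℝ)/2) * A ^ ((1:ℝ)/2) := by ring
    have h4 : A ^ ((1:ℝ)/4) = (A ^ ((1:ℝ)/2)) ^ ((1:ℝ)/2) := by
      rw [← Real.rpow_mul hA0]; norm_num
    rw [h4]
    calc (A ^ ((1:ℝ)/2)) ^ ((1:ℝ)/2)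
        ≤ (3 * M * B ^ ((1:ℝ)/2)) ^ ((1:ℝ)/2) := by
          apply Real.rpow_le_rpow (le_of_lt (Real.rpow_pos_of_pos hApos _)) hhalf
          norm_num
      _ = (3:ℝ) ^ ((1:ℝ)/2) * M ^ ((1:ℝ)/2) * (B ^ ((1:ℝ)/2)) ^ ((1:ℝ)/2) := by
          rw [Real.mul_rpow (by positivity) (by positivity),
            Real.mul_rpow (by norm_num) hM0]
      _ = (3:ℝ) ^ ((1:ℝ)/2) * M ^ ((1:ℝ)/2) * B ^ ((1:ℝ)/4) := by
          rw [← Real.rpow_mul hB0]; norm_num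
      _ ≤ 3 * M ^ ((1:ℝ)/2) * B ^ ((1:ℝ)/4) := by
          have h3 : (3:ℝ) ^ ((1:ℝ)/2) ≤ 3 := by
            calc (3:ℝ) ^ ((1:ℝ)/2) ≤ (3:ℝ) ^ (1:ℝ) :=
                Real.rpow_le_rpow_of_exponent_le (by norm_num) (by norm_num)
              _ = 3 := Real.rpow_one 3
          have := mul_nonneg (Real.rpow_nonneg hM0 ((1:ℝ)/2)) (Real.rpow_nonneg hB0 ((1:ℝ)/4))
          nlinarith
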